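/- The four-dimensional Menger sponge has Hausdorff dimension log 72 / log 3. Precisely, let D₄ = {d ∈ Fin 4 → ({0,1,2} : Set ℝ) | at most two coordinates of d equal 1} (so |D₄| = 72), let Φ(A) = ⋃_{d ∈ D₄} (1/3) • (A + d) for A ⊆ (Fin 4 → ℝ), and let M₄ = ⋂_{n} Φⁿ([0,1]⁴). Then dimH M₄ = Real.logb 3 72. -/

import Mathlib

open MeasureTheory Set Filter
open scoped ENNReal NNReal Topology


/-- The 72 translation vectors used in the construction of the four-dimensional Menger
sponge: vectors in `{0,1,2}⁴` with at most two coordinates equal to `1`. -/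
def menger4Directions : Set (Fin 4 → ℝ) :=
  {d | (∀ i, d i = 0 ∨ d i = 1 ∨ d i = 2) ∧ ({i | d i = 1} : Set (Fin 4)).ncard ≤ 2}

/-- One iteration step of the four-dimensional Menger sponge construction:
`Φ(A) = ⋃_{d ∈ D₄} (1/3) • (A + d)`. -/
def menger4Step (A : Set (Fin 4 → ℝ)) : Set (Fin 4 → ℝ) :=
  ⋃ d ∈ menger4Directions, (fun x => (1 / 3 : ℝ) • (x + d)) '' A

/-- The four-dimensional Menger sponge. -/
def mengerSponge4 : Set (Fin 4 → ℝ) :=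
  ⋂ n, menger4Step^[n] (Set.Icc 0 1)


namespace M4aux
noncomputable section

abbrev Good : Type := {v : Fin 4 → Fin 3 // (Finset.univ.filter (fun i => v i = 1)).card ≤ 2}

lemma card_good : Fintype.card Good = 72 := by decide

def zeta : ZMod 72 ≃ Good := Fintype.equivOfCardEq (by simp [ZMod.card, card_good])

/-- natural-number digits -/

def En (j : ZMod 72) : Fin 4 → ℕ := fun i => ((zeta j).1 i : ℕ)

def eR (j : ZMod 72) : Fin 4 → ℝ := fun i => (En j i : ℝ)

lemma En_lt (j : ZMod 72) (i : Fin 4) : En j i < 3 := (zeta j).1 i |>.isLt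

lemma En_inj : Function.Injective En := by
  intro a b h
  apply zeta.injective
  apply Subtype.ext
  funext i
  have := congrFun h i
  exact Fin.ext (by simpa [En] using this)

lemma eR_mem (j : ZMod 72) : eR j ∈ menger4Directions := by
  constructor
  · intro i
    have := En_lt j i
    interval_cases h : En j i <;> simp [eR, h]
  · have : ({i | eR j i = 1} : Set (Fin 4)) = ↑(Finset.univ.filter (fun i => (zeta j).1 i = 1)) := by
      ext i
      simp only [eR, En, mem_setOf_eq, Finset.coe_filter, Finset.mem_univ, true_and]
      constructor
      · intro h; exact Fin.ext (by exact_mod_cast h)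
      · intro h; rw [h]; norm_num
    rw [this, Set.ncard_coe_finset]
    exact (zeta j).2

lemma eR_surj {d : Fin 4 → ℝ} (hd : d ∈ menger4Directions) : ∃ j, eR j = d := by
  obtain ⟨h1, h2⟩ := hd
  set v : Fin 4 → Fin 3 := fun i => if d i = 0 then 0 else if d i = 1 then 1 else 2 with hv
  have hvd : ∀ i, ((v i : ℕ) : ℝ) = d i := by
    intro i
    rcases h1 i with h | h | h <;> simp [hv, h]
  have hgood : (Finset.univ.filter (fun i => v i = 1)).card ≤ 2 := by
    have hset : ({i | d i = 1} : Set (Fin 4)) = ↑(Finset.univ.filter (fun i => v i = 1)) := by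
      ext i
      simp only [mem_setOf_eq, Finset.coe_filter, Finset.mem_univ, true_and]
      constructor
      · intro h; simp [hv, h]
      · intro h
        have := hvd i
        rw [h] at this
        norm_num at this
        exact this.symm
    rw [hset, Set.ncard_coe_finset] at h2
    exact h2
  refine ⟨zeta.symm ⟨v, hgood⟩, ?_⟩
  funext i
  simp only [eR, En, Equiv.apply_symm_apply]
  exact hvd i

def nval (n : ℕ) (a : Fin n → ℕ) : ℕ := ∑ k : Fin n, a k * 3 ^ (n - 1 - (k : ℕ))

@[simp] lemma nval_zero (a : Fin 0 → ℕ) : nval 0 a = 0 := by simp [nval]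

lemma nval_cons (n : ℕ) (j : ℕ) (a : Fin n → ℕ) :
    nval (n + 1) (Fin.cons j a) = j * 3 ^ n + nval n a := by
  rw [nval, Fin.sum_univ_succ]
  simp only [Fin.cons_zero, Fin.cons_succ, Fin.val_zero, Fin.val_succ, Nat.sub_zero,
    Nat.add_sub_cancel, nval]
  congr 1
  apply Finset.sum_congr rfl
  intro k _
  congr 2
  omega

lemma nval_snoc (n : ℕ) (a : Fin (n + 1) → ℕ) :
    nval (n + 1) a = 3 * nval n (Fin.init a) + a (Fin.last n) := by
  rw [nval, Fin.sum_univ_castSucc]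
  simp only [Fin.val_last, Nat.add_sub_cancel, Nat.sub_self, pow_zero, mul_one]
  congr 1
  rw [nval, Finset.mul_sum]
  apply Finset.sum_congr rfl
  intro k _
  have hk : (k : ℕ) < n := k.isLt
  rw [Fin.init]
  simp only [Fin.coe_castSucc]
  rw [show n - (k:ℕ) = (n - 1 - (k:ℕ)) + 1 by omega, pow_succ]
  ring

lemma nval_inj (n : ℕ) (a b : Fin n → ℕ) (ha : ∀ k, a k < 3) (hb : ∀ k, b k < 3)
    (h : nval n a = nval n b) : a = b := by
  induction n with
  | zero => funext k; exact k.elim0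
  | succ n ih =>
    rw [nval_snoc, nval_snoc] at h
    have h1 : a (Fin.last n) = b (Fin.last n) := by
      have := ha (Fin.last n); have := hb (Fin.last n); omega
    have h2 : nval n (Fin.init a) = nval n (Fin.init b) := by
      have := ha (Fin.last n); have := hb (Fin.last n); omega
    have h3 := ih (Fin.init a) (Fin.init b) (fun k => ha _) (fun k => hb _) h2
    funext k
    rcases Fin.eq_castSucc_or_eq_last k with ⟨j, rfl⟩ | rfl
    · exact congrFun h3 j
    · exact h1

def corner (n : ℕ) (w : Fin n → ZMod 72) : Fin 4 → ℝ :=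
  fun i => (nval n (fun k => En (w k) i) : ℝ) / 3 ^ n

def cube (n : ℕ) (w : Fin n → ZMod 72) : Set (Fin 4 → ℝ) :=
  Icc (corner n w) (corner n w + fun _ => (3 : ℝ)⁻¹ ^ n)

lemma corner_cons (n : ℕ) (j : ZMod 72) (w : Fin n → ZMod 72) (i : Fin 4) :
    corner (n + 1) (Fin.cons j w) i = (corner n w i + eR j i) / 3 := by
  have h : (fun k : Fin (n+1) => En ((Fin.cons j w : Fin (n+1) → ZMod 72) k) i)
      = Fin.cons (En j i) (fun k : Fin n => En (w k) i) := by
    funext k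
    refine Fin.cases ?_ ?_ k <;> simp
  rw [corner, h, nval_cons]
  simp only [corner, eR]
  push_cast
  field_simp
  ring

lemma image_Icc (d : Fin 4 → ℝ) (a b : Fin 4 → ℝ) :
    (fun x => (1 / 3 : ℝ) • (x + d)) '' Icc a b =
      Icc (fun i => (a i + d i) / 3) (fun i => (b i + d i) / 3) := by
  ext x
  constructor
  · rintro ⟨y, ⟨hy1, hy2⟩, rfl⟩
    constructor
    · intro i
      have := hy1 i
      simp only [Pi.smul_apply, Pi.add_apply, smul_eq_mul]
      linarith
    · intro i
      have := hy2 i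
      simp only [Pi.smul_apply, Pi.add_apply, smul_eq_mul]
      linarith
  · rintro ⟨h1, h2⟩
    refine ⟨fun i => 3 * x i - d i, ⟨fun i => ?_, fun i => ?_⟩, ?_⟩
    · have := h1 i; simp only at this ⊢; linarith
    · have := h2 i; simp only at this ⊢; linarith
    · funext i; simp only [Pi.smul_apply, Pi.add_apply, smul_eq_mul]; ring

lemma cube_cons (n : ℕ) (j : ZMod 72) (w : Fin n → ZMod 72) :
    cube (n + 1) (Fin.cons j w) = (fun x => (1 / 3 : ℝ) • (x + eR j)) '' cube n w := by
  rw [cube, cube, image_Icc]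
  have h1 : (fun i => (corner n w i + eR j i) / 3) = corner (n + 1) (Fin.cons j w) := by
    funext i; rw [corner_cons]
  have h2 : (fun i => ((corner n w + fun _ : Fin 4 => (3:ℝ)⁻¹ ^ n) i + eR j i) / 3)
      = corner (n + 1) (Fin.cons j w) + fun _ : Fin 4 => (3:ℝ)⁻¹ ^ (n+1) := by
    funext i
    simp only [Pi.add_apply, corner_cons]
    ring
  rw [h1, h2]

lemma cube_zero (w : Fin 0 → ZMod 72) : cube 0 w = Icc 0 1 := by
  have h0 : corner 0 w = 0 := by funext i; simp [corner, nval]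
  have h1 : ((0 : Fin 4 → ℝ) + fun _ => (3:ℝ)⁻¹ ^ 0) = 1 := by
    funext i; simp
  rw [cube, h0, h1]

lemma iterate_eq (n : ℕ) :
    menger4Step^[n] (Icc 0 1) = ⋃ w : Fin n → ZMod 72, cube n w := by
  induction n with
  | zero =>
    simp only [Function.iterate_zero, id_eq]
    rw [show (⋃ w : Fin 0 → ZMod 72, cube 0 w) = ⋃ _w : Fin 0 → ZMod 72, Icc 0 1 by
      simp only [cube_zero], iUnion_const]
  | succ n ih =>
    rw [Function.iterate_succ_apply', ih, menger4Step]
    ext x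
    constructor
    · intro hx
      obtain ⟨d, hd, hx⟩ := mem_iUnion₂.1 hx
      rw [image_iUnion] at hx
      obtain ⟨w, hw⟩ := mem_iUnion.1 hx
      obtain ⟨j, rfl⟩ := eR_surj hd
      exact mem_iUnion.2 ⟨Fin.cons j w, by rw [cube_cons]; exact hw⟩
    · intro hx
      obtain ⟨w', hw'⟩ := mem_iUnion.1 hx
      rw [← Fin.cons_self_tail w', cube_cons] at hw'
      refine mem_iUnion₂.2 ⟨eR (w' 0), eR_mem _, ?_⟩
      rw [image_iUnion]
      exact mem_iUnion.2 ⟨Fin.tail w', hw'⟩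

instance : TopologicalSpace (ZMod 72) := ⊥

instance : DiscreteTopology (ZMod 72) := ⟨rfl⟩

instance : MeasurableSpace (ZMod 72) := borel _

instance : BorelSpace (ZMod 72) := ⟨rfl⟩

instance : IsTopologicalAddGroup (ZMod 72) :=
  { continuous_add := continuous_of_discreteTopology
    continuous_neg := continuous_of_discreteTopology }

abbrev Om := ℕ → ZMod 72

def g (ω : Om) : Fin 4 → ℝ := fun i => ∑' k : ℕ, eR (ω k) i / 3 ^ (k + 1)

lemma eR_nonneg (j i) : 0 ≤ eR j i := Nat.cast_nonneg _

lemma eR_le_two (j i) : eR j i ≤ 2 := by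
  have := En_lt j i
  simp only [eR]
  exact_mod_cast Nat.lt_succ_iff.1 this

lemma term_nonneg (ω : Om) (i : Fin 4) (k : ℕ) : 0 ≤ eR (ω k) i / 3 ^ (k + 1) :=
  div_nonneg (eR_nonneg _ _) (by positivity)

lemma term_le (ω : Om) (i : Fin 4) (k : ℕ) :
    eR (ω k) i / 3 ^ (k + 1) ≤ (2/3) * (3:ℝ)⁻¹ ^ k := by
  have h : (2:ℝ)/3 * (3:ℝ)⁻¹ ^ k = 2 / 3 ^ (k+1) := by
    rw [inv_pow]
    field_simp
    ring
  rw [h]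
  gcongr
  exact eR_le_two _ _

lemma summable_u : Summable (fun k : ℕ => (2/3) * (3:ℝ)⁻¹ ^ k) :=
  (summable_geometric_of_lt_one (by norm_num) (by norm_num)).mul_left _

lemma tsum_u : ∑' k : ℕ, (2/3) * (3:ℝ)⁻¹ ^ k = 1 := by
  rw [tsum_mul_left, tsum_geometric_of_lt_one (by norm_num) (by norm_num)]
  norm_num

lemma summable_g (ω : Om) (i : Fin 4) : Summable (fun k : ℕ => eR (ω k) i / 3 ^ (k + 1)) :=
  Summable.of_nonneg_of_le (term_nonneg ω i) (term_le ω i) summable_u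

lemma g_le_one (ω : Om) (i : Fin 4) : g ω i ≤ 1 := by
  rw [g, ← tsum_u]
  exact Summable.tsum_le_tsum (term_le ω i) (summable_g ω i) summable_u

lemma g_nonneg (ω : Om) (i : Fin 4) : 0 ≤ g ω i :=
  tsum_nonneg (term_nonneg ω i)

lemma g_shift (ω : Om) (i : Fin 4) :
    g ω i = (eR (ω 0) i + g (fun k => ω (k + 1)) i) / 3 := by
  have hs := summable_g ω i
  rw [g, Summable.tsum_eq_zero_add hs]
  have h : ∀ k : ℕ, eR (ω (k+1)) i / 3 ^ (k + 1 + 1) = (1/3) * (eR (ω (k+1)) i / 3 ^ (k + 1)) := by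
    intro k; ring
  rw [tsum_congr h, tsum_mul_left]
  simp only [g]
  ring

lemma g_continuous : Continuous g := by
  apply continuous_pi
  intro i
  apply continuous_tsum (u := fun k : ℕ => (2/3) * (3:ℝ)⁻¹ ^ k)
  · intro k
    exact (continuous_of_discreteTopology (α := ZMod 72)
      (f := fun j => eR j i / 3 ^ (k+1))).comp (continuous_apply k)
  · exact summable_u
  · intro k ω
    rw [Real.norm_eq_abs, abs_of_nonneg (term_nonneg ω i k)]
    exact term_le ω i k

lemma g_mem_cube (n : ℕ) (ω : Om) : g ω ∈ cube n (fun k : Fin n => ω (k : ℕ)) := by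
  induction n generalizing ω with
  | zero =>
    rw [cube_zero]
    exact ⟨fun i => g_nonneg ω i, fun i => g_le_one ω i⟩
  | succ n ih =>
    have hw : (fun k : Fin (n+1) => ω (k : ℕ))
        = Fin.cons (ω 0) (fun k : Fin n => ω ((k : ℕ) + 1)) := by
      funext k
      refine Fin.cases ?_ ?_ k
      · simp
      · intro k; simp
    rw [hw, cube_cons]
    have h2 := ih (fun k => ω (k + 1))
    refine ⟨g (fun k => ω (k + 1)), h2, ?_⟩
    funext i
    simp only [Pi.smul_apply, Pi.add_apply, smul_eq_mul]
    rw [g_shift ω i]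
    ring

def K0 : TopologicalSpace.PositiveCompacts Om := ⟨⟨univ, isCompact_univ⟩, by simp⟩

def mu0 : Measure Om := Measure.addHaarMeasure K0

instance : mu0.IsAddLeftInvariant := Measure.isAddLeftInvariant_addHaarMeasure K0

lemma mu0_univ : mu0 univ = 1 := by
  have h : (univ : Set Om) = (K0 : Set Om) := rfl
  rw [h]
  exact Measure.addHaarMeasure_self

def cyl (n : ℕ) (w : Fin n → ZMod 72) : Set Om := {ω | ∀ k : Fin n, ω (k : ℕ) = w k}

lemma cyl_meas (n : ℕ) (w : Fin n → ZMod 72) : MeasurableSet (cyl n w) := by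
  have : cyl n w = ⋂ k : Fin n, (fun ω : Om => ω (k : ℕ)) ⁻¹' {w k} := by
    ext ω; simp [cyl]
  rw [this]
  exact MeasurableSet.iInter fun k => (measurable_pi_apply _) (measurableSet_singleton _)

lemma cyl_measure (n : ℕ) (w : Fin n → ZMod 72) : mu0 (cyl n w) = ((72 : ℝ≥0∞) ^ n)⁻¹ := by
  -- translation invariance: all cylinders have equal measure
  have key : ∀ w' : Fin n → ZMod 72, mu0 (cyl n w') = mu0 (cyl n (0 : Fin n → ZMod 72)) := by
    intro w'
    set a : Om := fun m => if h : m < n then w' ⟨m, h⟩ else 0 with ha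
    have hpre : (fun ω => a + ω) ⁻¹' cyl n w' = cyl n 0 := by
      ext ω
      simp only [cyl, mem_preimage, mem_setOf_eq, Pi.add_apply, Pi.zero_apply]
      constructor
      · intro h k
        have := h k
        rw [ha] at this
        simp only [k.isLt, dif_pos, Fin.eta] at this
        exact (left_eq_add).1 this.symm
      · intro h k
        have hk := h k
        rw [ha]
        simp only [k.isLt, dif_pos, Fin.eta, hk, add_zero]
    rw [← hpre, measure_preimage_add]
  have hdisj : Pairwise (Function.onFun Disjoint fun w' : Fin n → ZMod 72 => cyl n w') := by
    intro w1 w2 hne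
    rw [Function.onFun, Set.disjoint_left]
    intro ω h1 h2
    exact hne (funext fun k => (h1 k).symm.trans (h2 k))
  have hcover : (⋃ w' : Fin n → ZMod 72, cyl n w') = univ := by
    ext ω
    simp only [mem_iUnion, mem_univ, iff_true]
    exact ⟨fun k : Fin n => ω k, fun k => rfl⟩
  have huniv : mu0 univ = 1 := by
    have : (univ : Set Om) = (K0 : Set Om) := rfl
    rw [this]
    exact Measure.addHaarMeasure_self
  have hsum : ∑' w' : Fin n → ZMod 72, mu0 (cyl n w') = 1 := by
    rw [← measure_iUnion hdisj (fun w' => cyl_meas n w'), hcover, huniv]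
  rw [tsum_fintype] at hsum
  have hcard : (Finset.univ : Finset (Fin n → ZMod 72)).card = 72 ^ n := by
    rw [Finset.card_univ]
    simp [Fintype.card_fun, ZMod.card]
  rw [Finset.sum_congr rfl (fun w' _ => key w'), Finset.sum_const, hcard] at hsum
  have h72 : ((72 : ℝ≥0∞) ^ n) ≠ 0 := by positivity
  have h72' : ((72 : ℝ≥0∞) ^ n) ≠ ⊤ := by
    exact ENNReal.pow_ne_top (by norm_num)
  rw [key w]
  have : ((72:ℝ≥0∞) ^ n) * mu0 (cyl n 0) = 1 := by
    rw [← hsum, nsmul_eq_mul]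
    norm_num
  calc mu0 (cyl n 0) = ((72:ℝ≥0∞)^n)⁻¹ * (((72:ℝ≥0∞)^n) * mu0 (cyl n 0)) := by
        rw [← mul_assoc, ENNReal.inv_mul_cancel h72 h72', one_mul]
    _ = ((72:ℝ≥0∞)^n)⁻¹ := by rw [this, mul_one]

open Classical in
lemma box_measure (n : ℕ) (y : Fin 4 → ℝ) :
    mu0 (g ⁻¹' Icc (fun i => y i - (3:ℝ)⁻¹ ^ n) (fun i => y i + (3:ℝ)⁻¹ ^ n))
      ≤ 256 * ((72 : ℝ≥0∞) ^ n)⁻¹ := by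
  set W : Finset (Fin n → ZMod 72) := Finset.univ.filter
    (fun w => ∀ i, y i - 2 * (3:ℝ)⁻¹ ^ n ≤ corner n w i ∧ corner n w i ≤ y i + (3:ℝ)⁻¹ ^ n)
    with hW
  -- counting
  have hF : Function.Injective (fun (w : Fin n → ZMod 72) (i : Fin 4) =>
      (nval n (fun k => En (w k) i) : ℤ)) := by
    intro w1 w2 h
    funext k
    apply En_inj
    funext i
    have hi : ((nval n fun k => En (w1 k) i : ℕ) : ℤ) = ((nval n fun k => En (w2 k) i : ℕ) : ℤ) :=
      congrFun h i
    have := nval_inj n (fun k => En (w1 k) i) (fun k => En (w2 k) i)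
      (fun k => En_lt _ _) (fun k => En_lt _ _) (by exact_mod_cast hi)
    exact congrFun this k
  have hcard : W.card ≤ 256 := by
    set m : Fin 4 → ℤ := fun i => ⌈y i * 3 ^ n⌉ - 2 with hm
    have himg : W.image (fun w i => (nval n (fun k => En (w k) i) : ℤ))
        ⊆ Finset.Icc m (fun i => m i + 3) := by
      intro z hz
      simp only [Finset.mem_image] at hz
      obtain ⟨w, hw, rfl⟩ := hz
      rw [hW, Finset.mem_filter] at hw
      rw [Finset.mem_Icc]
      have h3n : (0:ℝ) < 3 ^ n := by positivity
      constructor <;> intro i <;> obtain ⟨hlo, hhi⟩ := hw.2 i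
      · -- m i ≤ nval
        rw [hm]
        simp only
        rw [sub_le_iff_le_add, Int.ceil_le]
        push_cast
        have hmul := (le_div_iff₀ h3n).1 hlo
        have hinv : (3:ℝ)⁻¹ ^ n * 3 ^ n = 1 := by
          rw [← mul_pow]; norm_num
        nlinarith [hmul, hinv]
      · -- nval ≤ m i + 3
        rw [hm]
        simp only
        rw [corner] at hhi
        have hmul := (div_le_iff₀ h3n).1 hhi
        have hinv : (3:ℝ)⁻¹ ^ n * 3 ^ n = 1 := by
          rw [← mul_pow]; norm_num
        have hceil := Int.le_ceil (y i * 3 ^ n)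
        have hreal : ((nval n fun k => En (w k) i : ℕ) : ℝ) ≤ (⌈y i * 3 ^ n⌉ : ℝ) + 1 := by
          nlinarith [hmul, hinv, hceil]
        have : ((nval n fun k => En (w k) i : ℕ) : ℤ) ≤ ⌈y i * 3 ^ n⌉ + 1 := by
          exact_mod_cast hreal
        omega
    calc W.card = (W.image (fun w i => (nval n (fun k => En (w k) i) : ℤ))).card :=
          (Finset.card_image_of_injective W hF).symm
      _ ≤ (Finset.Icc m (fun i => m i + 3)).card := Finset.card_le_card himg
      _ = 256 := by
          rw [Pi.card_Icc]
          have h4 : ∀ x : Fin 4, (Finset.Icc (m x) (m x + 3)).card = 4 := by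
            intro x; rw [Int.card_Icc]; omega
          rw [Finset.prod_congr rfl (fun x _ => h4 x)]
          norm_num
  -- covering
  have hcover : g ⁻¹' Icc (fun i => y i - (3:ℝ)⁻¹ ^ n) (fun i => y i + (3:ℝ)⁻¹ ^ n)
      ⊆ ⋃ w ∈ W, cyl n w := by
    intro ω hω
    obtain ⟨hlo, hhi⟩ := hω
    have hc := g_mem_cube n ω
    obtain ⟨hc1, hc2⟩ := hc
    have hw0 : (fun k : Fin n => ω (k : ℕ)) ∈ W := by
      rw [hW, Finset.mem_filter]
      refine ⟨Finset.mem_univ _, fun i => ⟨?_, ?_⟩⟩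
      · have h1 := hlo i
        have h2 := hc2 i
        simp only [Pi.add_apply] at h2
        simp only at h1
        linarith
      · have h1 := hhi i
        have h2 := hc1 i
        simp only at h1 h2
        linarith
    exact mem_biUnion hw0 (fun k => rfl)
  calc mu0 _ ≤ mu0 (⋃ w ∈ W, cyl n w) := measure_mono hcover
    _ ≤ ∑ w ∈ W, mu0 (cyl n w) := measure_biUnion_finset_le W _
    _ = W.card * ((72 : ℝ≥0∞) ^ n)⁻¹ := by
        rw [Finset.sum_congr rfl (fun w _ => cyl_measure n w), Finset.sum_const, nsmul_eq_mul]
    _ ≤ 256 * ((72 : ℝ≥0∞) ^ n)⁻¹ := by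
        gcongr
        exact_mod_cast hcard

def s₀ : ℝ := Real.logb 3 72

lemma s₀_nonneg : 0 ≤ s₀ := Real.logb_nonneg (by norm_num) (by norm_num)

lemma s₀_pos : 0 < s₀ := Real.logb_pos (by norm_num) (by norm_num)

lemma rpow_s₀ : (3:ℝ) ^ s₀ = 72 := Real.rpow_logb (by norm_num) (by norm_num) (by norm_num)

lemma pow_rpow_s₀ (n : ℕ) : ((3:ℝ)⁻¹ ^ n) ^ s₀ = ((72:ℝ) ^ n)⁻¹ := by
  rw [inv_pow, Real.inv_rpow (by positivity), ← Real.rpow_natCast (3:ℝ) n,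
    ← Real.rpow_mul (by norm_num), mul_comm, Real.rpow_mul (by norm_num), rpow_s₀,
    Real.rpow_natCast]

lemma diam_cube (n : ℕ) (w : Fin n → ZMod 72) :
    EMetric.diam (cube n w) ≤ ENNReal.ofReal ((3:ℝ)⁻¹ ^ n) := by
  apply EMetric.diam_le
  intro x hx y hy
  rw [edist_dist]
  apply ENNReal.ofReal_le_ofReal
  rw [dist_pi_le_iff (by positivity)]
  intro i
  rw [Real.dist_eq, abs_sub_le_iff]
  obtain ⟨hx1, hx2⟩ := hx
  obtain ⟨hy1, hy2⟩ := hy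
  have e1 := hx1 i; have e2 := hx2 i; have e3 := hy1 i; have e4 := hy2 i
  simp only [Pi.add_apply] at e2 e4
  constructor <;> linarith

lemma mengerSponge4_eq : mengerSponge4 = ⋂ n, ⋃ w : Fin n → ZMod 72, cube n w := by
  rw [mengerSponge4]
  exact iInter_congr iterate_eq

lemma isClosed_sponge : IsClosed mengerSponge4 := by
  rw [mengerSponge4_eq]
  exact isClosed_iInter fun n => isClosed_iUnion_of_finite fun w => isClosed_Icc

lemma g_mem_sponge (ω : Om) : g ω ∈ mengerSponge4 := by
  rw [mengerSponge4_eq]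
  exact mem_iInter.2 fun n => mem_iUnion.2 ⟨_, g_mem_cube n ω⟩

-- upper bound

lemma upper : dimH mengerSponge4 ≤ ENNReal.ofReal s₀ := by
  have hne : μH[((s₀.toNNReal : ℝ≥0) : ℝ)] mengerSponge4 ≠ ⊤ := by
    rw [Real.coe_toNNReal _ s₀_nonneg]
    have hle : μH[s₀] mengerSponge4 ≤ 1 := by
      have hbound := Measure.hausdorffMeasure_le_liminf_sum s₀ mengerSponge4
        (l := atTop) (fun n => ENNReal.ofReal ((3:ℝ)⁻¹ ^ n))
        (by
          have h0 : Tendsto (fun n : ℕ => ((3:ℝ)⁻¹) ^ n) atTop (𝓝 0) :=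
            tendsto_pow_atTop_nhds_zero_of_lt_one (by norm_num) (by norm_num)
          simpa using ENNReal.tendsto_ofReal h0)
        (fun n (w : Fin n → ZMod 72) => cube n w)
        (Eventually.of_forall fun n w => diam_cube n w)
        (Eventually.of_forall fun n => by
          rw [mengerSponge4_eq]
          exact iInter_subset _ n)
      refine hbound.trans ?_
      have hterm : ∀ n : ℕ, (∑ w : Fin n → ZMod 72,
          EMetric.diam (cube n w) ^ s₀) ≤ 1 := by
        intro n
        have h1 : ∀ w : Fin n → ZMod 72, EMetric.diam (cube n w) ^ s₀
            ≤ ENNReal.ofReal (((72:ℝ) ^ n)⁻¹) := by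
          intro w
          calc EMetric.diam (cube n w) ^ s₀
              ≤ (ENNReal.ofReal ((3:ℝ)⁻¹ ^ n)) ^ s₀ :=
                ENNReal.rpow_le_rpow (diam_cube n w) s₀_nonneg
            _ = ENNReal.ofReal (((3:ℝ)⁻¹ ^ n) ^ s₀) :=
                ENNReal.ofReal_rpow_of_pos (by positivity)
            _ = ENNReal.ofReal (((72:ℝ) ^ n)⁻¹) := by rw [pow_rpow_s₀]
        calc ∑ w : Fin n → ZMod 72, EMetric.diam (cube n w) ^ s₀
            ≤ ∑ _w : Fin n → ZMod 72, ENNReal.ofReal (((72:ℝ) ^ n)⁻¹) :=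
              Finset.sum_le_sum fun w _ => h1 w
          _ = (72 ^ n : ℕ) * ENNReal.ofReal (((72:ℝ) ^ n)⁻¹) := by
              rw [Finset.sum_const, Finset.card_univ, nsmul_eq_mul]
              congr 1
              simp [Fintype.card_fun, ZMod.card]
          _ = 1 := by
              rw [ENNReal.ofReal_inv_of_pos (by positivity),
                ENNReal.ofReal_pow (by norm_num), ENNReal.ofReal_ofNat]
              push_cast
              rw [ENNReal.mul_inv_cancel (by positivity) (ENNReal.pow_ne_top (by norm_num))]
      calc liminf (fun n => ∑ w : Fin n → ZMod 72, EMetric.diam (cube n w) ^ s₀) atTop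
          ≤ liminf (fun _n : ℕ => (1 : ℝ≥0∞)) atTop := by
            apply liminf_le_liminf (Eventually.of_forall hterm)
        _ = 1 := liminf_const 1
    exact (hle.trans_lt (by norm_num)).ne
  have := dimH_le_of_hausdorffMeasure_ne_top hne
  rwa [show (s₀.toNNReal : ℝ≥0∞) = ENNReal.ofReal s₀ from rfl] at this

-- lower bound

def mu : Measure (Fin 4 → ℝ) := mu0.map g

lemma mu_sponge : mu mengerSponge4 = 1 := by
  rw [mu, Measure.map_apply g_continuous.measurable isClosed_sponge.measurableSet]
  have : g ⁻¹' mengerSponge4 = univ := eq_univ_of_forall fun ω => g_mem_sponge ω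
  rw [this, mu0_univ]

lemma mu_box (n : ℕ) (y : Fin 4 → ℝ) :
    mu (Icc (fun i => y i - (3:ℝ)⁻¹ ^ n) (fun i => y i + (3:ℝ)⁻¹ ^ n))
      ≤ 256 * ((72 : ℝ≥0∞) ^ n)⁻¹ := by
  rw [mu, Measure.map_apply g_continuous.measurable measurableSet_Icc]
  exact box_measure n y

lemma mu_small (n : ℕ) (t : Set (Fin 4 → ℝ)) (y : Fin 4 → ℝ)
    (h : ∀ z ∈ t, ∀ i, |z i - y i| ≤ (3:ℝ)⁻¹ ^ n) :
    mu t ≤ 256 * ((72 : ℝ≥0∞) ^ n)⁻¹ := by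
  refine (measure_mono ?_).trans (mu_box n y)
  intro z hz
  exact ⟨fun i => by have := (abs_le.1 (h z hz i)).1; linarith,
         fun i => by have := (abs_le.1 (h z hz i)).2; linarith⟩

lemma mass_bound (t : Set (Fin 4 → ℝ)) (ht : EMetric.diam t ≤ 1) :
    mu t ≤ 18432 * EMetric.diam t ^ s₀ := by
  rcases eq_empty_or_nonempty t with rfl | ⟨y, hy⟩
  · simp
  have hrtop : EMetric.diam t ≠ ⊤ := (ht.trans_lt (by norm_num)).ne
  have hdist : ∀ z ∈ t, ∀ i, |z i - y i| ≤ (EMetric.diam t).toReal := by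
    intro z hz i
    have h1 : edist z y ≤ EMetric.diam t := EMetric.edist_le_diam_of_mem hz hy
    have h2 : dist z y ≤ (EMetric.diam t).toReal := by
      rw [← ENNReal.toReal_le_toReal (edist_ne_top z y) hrtop] at h1
      rwa [dist_edist]
    calc |z i - y i| = dist (z i) (y i) := (Real.dist_eq _ _).symm
      _ ≤ dist z y := dist_le_pi_dist z y i
      _ ≤ _ := h2
  rcases eq_or_ne (EMetric.diam t) 0 with hr0 | hr0
  · -- diameter zero
    have hmu : mu t = 0 := by
      have hle : ∀ n : ℕ, mu t ≤ 256 * ((72 : ℝ≥0∞) ^ n)⁻¹ := by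
        intro n
        apply mu_small n t y
        intro z hz i
        have h0 : |z i - y i| ≤ 0 := by simpa [hr0] using hdist z hz i
        exact h0.trans (by positivity)
      have htend : Tendsto (fun n : ℕ => 256 * ((72 : ℝ≥0∞) ^ n)⁻¹) atTop (𝓝 0) := by
        have h1 : Tendsto (fun n : ℕ => ((72 : ℝ≥0∞)⁻¹) ^ n) atTop (𝓝 0) :=
          ENNReal.tendsto_pow_atTop_nhds_zero_of_lt_one
            (ENNReal.inv_lt_one.2 (by norm_num))
        have h2 := ENNReal.Tendsto.const_mul (a := (256 : ℝ≥0∞)) h1 (Or.inr (by norm_num))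
        simpa [ENNReal.inv_pow, mul_zero] using h2
      exact le_antisymm (ge_of_tendsto' htend hle) zero_le
    rw [hmu]
    exact zero_le
  -- positive diameter
  set r' : ℝ := (EMetric.diam t).toReal with hr'
  have hr'pos : 0 < r' := ENNReal.toReal_pos hr0 hrtop
  have hr'le : r' ≤ 1 := by
    rw [hr']
    calc (EMetric.diam t).toReal ≤ (1 : ℝ≥0∞).toReal :=
      ENNReal.toReal_mono (by norm_num) ht
      _ = 1 := by simp
  have hex : ∃ k : ℕ, (3:ℝ)⁻¹ ^ (k + 1) < r' := by
    obtain ⟨N, hN⟩ := exists_pow_lt_of_lt_one hr'pos (show (3:ℝ)⁻¹ < 1 by norm_num)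
    exact ⟨N, lt_of_le_of_lt (pow_le_pow_of_le_one (by norm_num) (by norm_num)
      (Nat.le_succ N)) hN⟩
  set n := Nat.find hex with hn
  have h1 : (3:ℝ)⁻¹ ^ (n + 1) < r' := Nat.find_spec hex
  have h2 : r' ≤ (3:ℝ)⁻¹ ^ n := by
    rcases Nat.eq_zero_or_pos n with h | h
    · rw [h, pow_zero]; exact hr'le
    · have := Nat.find_min hex (Nat.sub_lt h one_pos)
      push_neg at this
      calc r' ≤ (3:ℝ)⁻¹ ^ (n - 1 + 1) := this
        _ = (3:ℝ)⁻¹ ^ n := by congr 1; omega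
  have hmu : mu t ≤ 256 * ((72 : ℝ≥0∞) ^ n)⁻¹ :=
    mu_small n t y fun z hz i => (hdist z hz i).trans h2
  refine hmu.trans ?_
  -- 256 * (72^n)⁻¹ = 18432 * (72^(n+1))⁻¹ ≤ 18432 * r^s₀
  have hrs : ENNReal.ofReal (((72:ℝ) ^ (n+1))⁻¹) ≤ EMetric.diam t ^ s₀ := by
    have hd : EMetric.diam t = ENNReal.ofReal r' := by
      rw [hr', ENNReal.ofReal_toReal hrtop]
    rw [hd, ENNReal.ofReal_rpow_of_pos hr'pos]
    apply ENNReal.ofReal_le_ofReal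
    rw [← pow_rpow_s₀ (n+1)]
    exact Real.rpow_le_rpow (by positivity) h1.le s₀_nonneg
  calc (256 : ℝ≥0∞) * ((72 : ℝ≥0∞) ^ n)⁻¹
      = 18432 * ENNReal.ofReal (((72:ℝ) ^ (n+1))⁻¹) := by
        rw [ENNReal.ofReal_inv_of_pos (by positivity), ENNReal.ofReal_pow (by norm_num),
          ENNReal.ofReal_ofNat, pow_succ,
          ENNReal.mul_inv (Or.inl (by positivity)) (Or.inl (ENNReal.pow_ne_top (by norm_num)))]
        rw [show (18432 : ℝ≥0∞) = 256 * 72 by norm_num]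
        calc (256:ℝ≥0∞) * ((72:ℝ≥0∞) ^ n)⁻¹
            = 256 * ((72:ℝ≥0∞) ^ n)⁻¹ * (72 * 72⁻¹) := by
              rw [ENNReal.mul_inv_cancel (by norm_num) (by norm_num), mul_one]
          _ = 256 * 72 * (((72:ℝ≥0∞) ^ n)⁻¹ * 72⁻¹) := by ring
    _ ≤ 18432 * EMetric.diam t ^ s₀ := by gcongr

lemma lower : ENNReal.ofReal s₀ ≤ dimH mengerSponge4 := by
  have hν : (18432 : ℝ≥0∞)⁻¹ • mu ≤ μH[s₀] := by
    apply Measure.le_hausdorffMeasure s₀ _ 1 one_pos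
    intro t ht
    simp only [Measure.smul_apply, smul_eq_mul]
    calc (18432 : ℝ≥0∞)⁻¹ * mu t ≤ (18432 : ℝ≥0∞)⁻¹ * (18432 * EMetric.diam t ^ s₀) := by
          gcongr
          exact mass_bound t ht
      _ = EMetric.diam t ^ s₀ := by
          rw [← mul_assoc, ENNReal.inv_mul_cancel (by norm_num) (by norm_num), one_mul]
  have hne : μH[((s₀.toNNReal : ℝ≥0) : ℝ)] mengerSponge4 ≠ 0 := by
    rw [Real.coe_toNNReal _ s₀_nonneg]
    have h1 : (18432 : ℝ≥0∞)⁻¹ * mu mengerSponge4 ≤ μH[s₀] mengerSponge4 := hν mengerSponge4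
    rw [mu_sponge, mul_one] at h1
    intro h0
    rw [h0] at h1
    rw [nonpos_iff_eq_zero, ENNReal.inv_eq_zero] at h1
    exact (by norm_num : (18432:ℝ≥0∞) ≠ ⊤) h1
  have := le_dimH_of_hausdorffMeasure_ne_zero hne
  rwa [show (s₀.toNNReal : ℝ≥0∞) = ENNReal.ofReal s₀ from rfl] at this

end
end M4aux

theorem dimH_mengerSponge4 : dimH mengerSponge4 = ENNReal.ofReal (Real.logb 3 72) :=
  le_antisymm M4aux.upper M4aux.lower
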